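/- arXiv:2510.22750 — 2 statements merged into one kernel-verified Lean document; each statement's English description precedes it below -/
import Mathlib

section
/- Fix p ∈ (0,1) and α > β > γ ≥ 0. The perfect free test blocks Π, i.e. V(1,0,Π) > Π, if and only if α > Π (equivalently, some positive-probability type realization has surplus strictly above Π). Moreover, if Π ≥ α then V(π,c,Π) ≤ Π for every π ∈ [0,1] and c ≥ 0. Consequently, for any feasible test set T containing the perfect free test (1,0), Π is ICPS-stable relative to T if and only if Π ≥ α, i.e. ICPS stability coincides with complete-information pairwise stability. -/
/-- Prior expected surplus in the two-type matching model. -/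
noncomputable def ES (p α β γ : ℝ) : ℝ :=
  p ^ 2 * α + 2 * p * (1 - p) * β + (1 - p) ^ 2 * γ

/-- Deviation value of a pair with status-quo joint payoff `Pi` under a credible test
of accuracy `π` and cost `c`. -/
noncomputable def V (p α β γ π c Pi : ℝ) : ℝ :=
  π * (p ^ 2 * max α Pi + 2 * p * (1 - p) * max β Pi + (1 - p) ^ 2 * max γ Pi)
    + (1 - π) * max (ES p α β γ) Pi - c

/-- A feasible test set: tests have accuracy in `[0,1]`, nonnegative cost,
and the null test `(0,0)` is available. -/
def FeasibleTestSet (T : Set (ℝ × ℝ)) : Prop :=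
  (∀ t ∈ T, 0 ≤ t.1 ∧ t.1 ≤ 1 ∧ 0 ≤ t.2) ∧ (0, 0) ∈ T

/-- The perfect free test blocks `Pi` iff `α > Pi`; if `Pi ≥ α` then no
test blocks `Pi`; hence for any feasible test set containing the perfect free test
`(1,0)`, ICPS stability of `Pi` coincides with complete-information pairwise
stability (`Pi ≥ α`). -/
theorem icps_eq_complete_info (p α β γ Pi : ℝ)
    (hp0 : 0 < p) (hp1 : p < 1)
    (hαβ : β < α) (hβγ : γ < β) (hγ : 0 ≤ γ) :
    (V p α β γ 1 0 Pi > Pi ↔ α > Pi)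
    ∧ (Pi ≥ α → ∀ π c : ℝ, 0 ≤ π → π ≤ 1 → 0 ≤ c → V p α β γ π c Pi ≤ Pi)
    ∧ (∀ T : Set (ℝ × ℝ), FeasibleTestSet T → (1, 0) ∈ T →
        ((∀ t ∈ T, ¬ (V p α β γ t.1 t.2 Pi > Pi)) ↔ Pi ≥ α)) := by
  have hp1' : 0 < 1 - p := by linarith
  have hES : ES p α β γ ≤ α := by
    unfold ES
    nlinarith [sq_nonneg p, sq_nonneg (1 - p), mul_pos hp0 hp1']
  have key2 : Pi ≥ α → ∀ π c : ℝ, 0 ≤ π → π ≤ 1 → 0 ≤ c →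
      V p α β γ π c Pi ≤ Pi := by
    intro hPi π c hπ0 hπ1 hc
    have h1 : max α Pi = Pi := max_eq_right hPi
    have h2 : max β Pi = Pi := max_eq_right (by linarith)
    have h3 : max γ Pi = Pi := max_eq_right (by linarith)
    have h4 : max (ES p α β γ) Pi = Pi := max_eq_right (by linarith)
    unfold V
    rw [h1, h2, h3, h4]
    nlinarith
  have key1 : V p α β γ 1 0 Pi > Pi ↔ α > Pi := by
    constructor
    · intro h
      by_contra hc
      push_neg at hc
      have := key2 hc 1 0 (by norm_num) (by norm_num) (by norm_num)
      linarith
    · intro h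
      have h1 : max α Pi = α := max_eq_left h.le
      have h2 : Pi ≤ max β Pi := le_max_right _ _
      have h3 : Pi ≤ max γ Pi := le_max_right _ _
      unfold V
      rw [h1]
      have hpp : 0 < p ^ 2 := by positivity
      nlinarith [sq_nonneg (1 - p), mul_pos hp0 hp1']
  refine ⟨key1, key2, ?_⟩
  intro T hT hmem
  constructor
  · intro hall
    have := hall (1, 0) hmem
    simp only at this
    by_contra hc
    push_neg at hc
    exact this (key1.mpr hc)
  · intro hPi t ht
    obtain ⟨h0, h1, h2⟩ := hT.1 t ht
    have := key2 hPi t.1 t.2 h0 h1 h2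
    linarith
end

section
/- Fix p ∈ (0,1), status-quo individual payoffs Π_f, Π_ℓ ∈ ℝ, and utility functions u_f, u_ℓ : {H,L} × {H,L} → ℝ with prior expectations E_f := p^2·u_f(H,H) + p(1−p)·(u_f(H,L)+u_f(L,H)) + (1−p)^2·u_f(L,L) and E_ℓ defined analogously. Let T be a feasible NTU test set containing the null test (0,0,0). If the pair is NTU-ICPS-stable (no feasible test (π, c_f, c_ℓ) ∈ T satisfies both V_f(π,c_f) > Π_f and V_ℓ(π,c_ℓ) > Π_ℓ), then the pair is NTU-Bayesian-stable: it is not the case that both E_f > Π_f and E_ℓ > Π_ℓ. Hence the set of NTU-ICPS-stable outcomes is contained in the set of NTU-Bayesian-stable outcomes. -/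
/-- Joint probability of a type realization `(θ_f, θ_ℓ)` (`true` = H, `false` = L)
under independent types with marginal `p`. -/
noncomputable def Pjoint (p : ℝ) (θ : Bool × Bool) : ℝ :=
  (if θ.1 then p else 1 - p) * (if θ.2 then p else 1 - p)

/-- Prior expected utility of an agent with utility function `u`. -/
noncomputable def Eprior (p : ℝ) (u : Bool × Bool → ℝ) : ℝ :=
  ∑ θ : Bool × Bool, Pjoint p θ * u θ

/-- The firm-side NTU deviation value of a test of accuracy `π` and individual cost
`c`: with probability `π` types are revealed and the pair deviates exactly when both
strictly gain; with probability `1−π` nothing is revealed and the pair deviates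
exactly when both strictly gain in prior expectation. -/
noncomputable def Vntu (p : ℝ) (uf ul : Bool × Bool → ℝ) (Pif Pil : ℝ)
    (π c : ℝ) : ℝ :=
  π * (∑ θ : Bool × Bool,
        Pjoint p θ * (if uf θ > Pif ∧ ul θ > Pil then uf θ else Pif))
    + (1 - π) * (if Eprior p uf > Pif ∧ Eprior p ul > Pil then Eprior p uf else Pif)
    - c

/-- A feasible NTU test set: triples `(π, c_f, c_ℓ)` with `π ∈ [0,1]`, nonnegative
individual costs, containing the null test `(0,0,0)`. -/
def FeasibleNTUTestSet (T : Set (ℝ × ℝ × ℝ)) : Prop :=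
  (∀ t ∈ T, 0 ≤ t.1 ∧ t.1 ≤ 1 ∧ 0 ≤ t.2.1 ∧ 0 ≤ t.2.2) ∧ (0, 0, 0) ∈ T

/-- NTU refinement. If no feasible test makes both the firm's and
the worker's deviation values strictly exceed their status-quo payoffs
(NTU-ICPS stability), then the pair is NTU-Bayesian-stable: it is not the case that
both prior expected utilities strictly exceed the status-quo payoffs. -/
theorem ntu_icps_implies_ntu_bayesian
    (p : ℝ) (hp0 : 0 < p) (hp1 : p < 1)
    (Pif Pil : ℝ) (uf ul : Bool × Bool → ℝ)
    (T : Set (ℝ × ℝ × ℝ)) (hT : FeasibleNTUTestSet T)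
    (hICPS : ∀ t ∈ T,
      ¬ (Vntu p uf ul Pif Pil t.1 t.2.1 > Pif
          ∧ Vntu p ul uf Pil Pif t.1 t.2.2 > Pil)) :
    ¬ (Eprior p uf > Pif ∧ Eprior p ul > Pil) := by
  rintro ⟨hf, hl⟩
  exact hICPS (0,0,0) hT.2 ⟨by simp [Vntu, if_pos hl, hf],
    by simp [Vntu, if_pos hf, hl]⟩
end
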